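/- arXiv:1306.5307 — 2 statements merged into one kernel-verified Lean document; each statement's English description precedes it below -/
import Mathlib

section
/- Let N ≥ 1, X a real normed space, C ⊆ X a convex subset, T_1,…,T_N : C → C nonexpansive mappings extended cyclically by T_n := T_{((n−1) mod N)+1}, (λ_n)_{n≥1} a sequence in [0,1], u ∈ C, and let (x_n) be the iteration x_0 = u, x_{n+1} = T_{n+1}(λ_{n+1}·u + (1 − λ_{n+1})·x_n). Let M > 0 with ‖x_n − u‖ ≤ M for all n ≥ 1. Assume θ : ℤ₊ → ℤ₊ is a rate of divergence for ∑_{n≥1} λ_n (i.e. ∑_{n=1}^{θ(m)} λ_n ≥ m for all m) and γ : (0,∞) → ℤ₊ is a Cauchy modulus for ∑_{n≥1} |λ_{n+N} − λ_n| (i.e. for all ε > 0 and m ≥ 1, ∑_{n=γ(ε)+1}^{γ(ε)+m} |λ_{n+N} − λ_n| ≤ ε). Then ‖x_n − x_{n+N}‖ → 0 with rate of convergence Φ̃(ε) = θ(γ(ε/(4M)) + max{⌈ln(4M/ε)⌉, 1}), i.e. ‖x_n − x_{n+N}‖ ≤ ε for all ε > 0 and all n ≥ Φ̃(ε). -/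
/-!
With `a n = ‖x n - x (n + N)‖`, nonexpansiveness and `T (n + N) = T n` give
`a (n + 1) ≤ (1 - λ (n + 1)) * a n + M * |λ (n + 1 + N) - λ (n + 1)|`.
Unrolling this from `K = γ (ε / (4M))` bounds `a n` by `∏ (1 - λ k) * a K` plus `M` times a tail
of the series `∑ |λ (k + N) - λ k|`, which is at most `ε / 4`. Since `λ k ≤ 1`, the first `K`
terms of `∑ λ k` contribute at most `K`, so for `n ≥ θ (K + m)` with `m ≥ log (4M / ε)` the terms
after `K` sum to at least `m`, and `∏ (1 - λ k) ≤ exp (-∑ λ k) ≤ exp (-m) ≤ ε / (4M)`. Together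
with `a K ≤ 2M` this gives `a n ≤ 3ε/4`.
-/

open Finset

lemma Finset.prod_one_sub_le_exp_neg_sum {ι : Type*} (s : Finset ι) {f : ι → ℝ}
    (hf : ∀ i ∈ s, f i ≤ 1) : ∏ i ∈ s, (1 - f i) ≤ Real.exp (-∑ i ∈ s, f i) := by
  rw [← sum_neg_distrib, Real.exp_sum]
  refine prod_le_prod (fun i hi => sub_nonneg.2 (hf i hi)) fun i _ => ?_
  linarith [Real.add_one_le_exp (-f i)]

lemma Real.exp_neg_le_of_log_inv_le {δ m : ℝ} (hδ : 0 < δ) (hm : Real.log δ⁻¹ ≤ m) :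
    Real.exp (-m) ≤ δ := by
  rw [Real.log_inv] at hm
  calc Real.exp (-m) ≤ Real.exp (Real.log δ) := Real.exp_le_exp.2 (by linarith)
    _ = δ := Real.exp_log hδ

section RealSequences

variable {lam : ℕ → ℝ}

lemma sum_Ioc_le_of_le_one (hlam : ∀ k, 0 < k → lam k ≤ 1) (a b : ℕ) :
    ∑ k ∈ Ioc a b, lam k ≤ (b - a : ℕ) := by
  calc ∑ k ∈ Ioc a b, lam k ≤ ∑ _k ∈ Ioc a b, (1 : ℝ) :=
        sum_le_sum fun k hk => hlam k (pos_of_gt (mem_Ioc.1 hk).1)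
    _ = (b - a : ℕ) := by simp

lemma le_of_natCast_le_sum_Icc_one (hlam : ∀ k, 0 < k → lam k ≤ 1) {m L : ℕ}
    (h : (m : ℝ) ≤ ∑ k ∈ Icc 1 L, lam k) : m ≤ L := by
  have := h.trans (sum_Ioc_le_of_le_one hlam 0 L)
  exact_mod_cast this

lemma natCast_le_sum_Ioc_of_le_sum_Icc_one (hlam : ∀ k, 0 < k → lam k ∈ Set.Icc 0 1)
    {K m L n : ℕ} (h : ((K + m : ℕ) : ℝ) ≤ ∑ k ∈ Icc 1 L, lam k) (hLn : L ≤ n) :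
    (m : ℝ) ≤ ∑ k ∈ Ioc K n, lam k := by
  have hle : ∀ k, 0 < k → lam k ≤ 1 := fun k hk => (hlam k hk).2
  have hKn : K ≤ n := by have := le_of_natCast_le_sum_Icc_one hle h; omega
  have hLn' : ∑ k ∈ Ioc 0 L, lam k ≤ ∑ k ∈ Ioc 0 n, lam k :=
    sum_le_sum_of_subset_of_nonneg (Ioc_subset_Ioc_right hLn)
      fun k hk _ => (hlam k (mem_Ioc.1 hk).1).1
  have hK := sum_Ioc_le_of_le_one hle 0 K
  rw [Nat.sub_zero] at hK
  rw [← sum_Ioc_consecutive _ (Nat.zero_le K) hKn] at hLn'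
  have hIcc : Icc 1 L = Ioc 0 L := Icc_add_one_left_eq_Ioc 0 L
  rw [hIcc] at h
  push_cast at h hK
  linarith

lemma le_prod_mul_add_sum_of_le_one_sub_mul_add {a b : ℕ → ℝ} {K : ℕ}
    (hlam : ∀ k, K < k → lam k ∈ Set.Icc 0 1) (hb : ∀ k, K < k → 0 ≤ b k)
    (hrec : ∀ k, K ≤ k → a (k + 1) ≤ (1 - lam (k + 1)) * a k + b (k + 1)) :
    ∀ n, K ≤ n → a n ≤ (∏ k ∈ Ioc K n, (1 - lam k)) * a K + ∑ k ∈ Ioc K n, b k := by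
  intro n hn
  induction n, hn using Nat.le_induction with
  | base => simp
  | succ n hKn ih =>
    rw [prod_Ioc_succ_top hKn, sum_Ioc_succ_top hKn]
    have hl := hlam (n + 1) (by omega)
    have hS : 0 ≤ ∑ k ∈ Ioc K n, b k := sum_nonneg fun k hk => hb k (mem_Ioc.1 hk).1
    calc a (n + 1) ≤ (1 - lam (n + 1)) * a n + b (n + 1) := hrec n hKn
      _ ≤ (1 - lam (n + 1)) * ((∏ k ∈ Ioc K n, (1 - lam k)) * a K + ∑ k ∈ Ioc K n, b k)
          + b (n + 1) := by gcongr; linarith [hl.2]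
      _ ≤ _ := by nlinarith [mul_nonneg hl.1 hS]

end RealSequences

section Cyclic

variable {α : Type*} {T : ℕ → α} {N : ℕ}

lemma forall_of_cyclic (P : α → Prop) (hN : 1 ≤ N)
    (hcyc : ∀ n, 1 ≤ n → T n = T ((n - 1) % N + 1)) (hP : ∀ i, 1 ≤ i → i ≤ N → P (T i)) :
    ∀ n, 1 ≤ n → P (T n) := by
  intro n hn
  rw [hcyc n hn]
  exact hP _ (Nat.le_add_left 1 _) (Nat.mod_lt _ hN)

lemma cyclic_add_period (hcyc : ∀ n, 1 ≤ n → T n = T ((n - 1) % N + 1)) {n : ℕ} (hn : 1 ≤ n) :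
    T (n + N) = T n := by
  rw [hcyc (n + N) (by omega), hcyc n hn, show n + N - 1 = n - 1 + N by omega, Nat.add_mod_right]

end Cyclic

section Halpern

variable {X : Type*} [NormedAddCommGroup X] [NormedSpace ℝ X] {C : Set X}

lemma norm_halpern_step_sub_le (hC : Convex ℝ C) {S : X → X}
    (hS : ∀ x ∈ C, ∀ y ∈ C, ‖S x - S y‖ ≤ ‖x - y‖) {u y z : X} (hu : u ∈ C) (hy : y ∈ C)
    (hz : z ∈ C) {s t : ℝ} (hs : s ∈ Set.Icc (0 : ℝ) 1) (ht : t ∈ Set.Icc (0 : ℝ) 1) :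
    ‖S (s • u + (1 - s) • y) - S (t • u + (1 - t) • z)‖ ≤
      (1 - s) * ‖y - z‖ + |t - s| * ‖z - u‖ := by
  have hs' : 0 ≤ 1 - s := by linarith [hs.2]
  calc ‖S (s • u + (1 - s) • y) - S (t • u + (1 - t) • z)‖
      ≤ ‖(s • u + (1 - s) • y) - (t • u + (1 - t) • z)‖ :=
        hS _ (hC hu hy hs.1 hs' (by ring)) _ (hC hu hz ht.1 (by linarith [ht.2]) (by ring))
    _ = ‖(1 - s) • (y - z) + (t - s) • (z - u)‖ := by congr 1; module
    _ ≤ (1 - s) * ‖y - z‖ + |t - s| * ‖z - u‖ := by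
        refine (norm_add_le _ _).trans_eq ?_
        rw [norm_smul, norm_smul, Real.norm_of_nonneg hs', Real.norm_eq_abs]

variable {T : ℕ → X → X} {lam : ℕ → ℝ} {u : X} {x : ℕ → X}

lemma halpern_iterate_mem (hC : Convex ℝ C) (hT : ∀ n, 1 ≤ n → Set.MapsTo (T n) C C)
    (hlam : ∀ n, 1 ≤ n → lam n ∈ Set.Icc (0 : ℝ) 1) (hu : u ∈ C) (hx0 : x 0 = u)
    (hx : ∀ n : ℕ, x (n + 1) = T (n + 1) (lam (n + 1) • u + (1 - lam (n + 1)) • x n)) :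
    ∀ n, x n ∈ C := by
  intro n
  induction n with
  | zero => exact hx0 ▸ hu
  | succ n ih =>
    have hl := hlam (n + 1) n.succ_pos
    rw [hx n]
    exact hT (n + 1) n.succ_pos (hC hu ih hl.1 (by linarith [hl.2]) (by ring))

lemma norm_halpern_iterate_sub_add_period_le {N : ℕ} (hC : Convex ℝ C)
    (hT : ∀ n, 1 ≤ n → ∀ x ∈ C, ∀ y ∈ C, ‖T n x - T n y‖ ≤ ‖x - y‖)
    (hper : ∀ n, 1 ≤ n → T (n + N) = T n)
    (hlam : ∀ n, 1 ≤ n → lam n ∈ Set.Icc (0 : ℝ) 1) (hu : u ∈ C) (hxC : ∀ n, x n ∈ C)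
    (hx : ∀ n : ℕ, x (n + 1) = T (n + 1) (lam (n + 1) • u + (1 - lam (n + 1)) • x n))
    {M : ℝ} (hxb : ∀ n, ‖x n - u‖ ≤ M) (k : ℕ) :
    ‖x (k + 1) - x (k + 1 + N)‖ ≤
      (1 - lam (k + 1)) * ‖x k - x (k + N)‖ + M * |lam (k + 1 + N) - lam (k + 1)| := by
  rw [show k + 1 + N = k + N + 1 by omega, hx k, hx (k + N),
    show k + N + 1 = k + 1 + N by omega, hper (k + 1) k.succ_pos]
  refine (norm_halpern_step_sub_le hC (hT (k + 1) k.succ_pos) hu (hxC k) (hxC (k + N))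
    (hlam _ k.succ_pos) (hlam _ (by omega))).trans ?_
  rw [mul_comm M]
  gcongr
  exact hxb _

lemma norm_halpern_iterate_sub_add_period_le_prod_mul_add_sum {N : ℕ} (hC : Convex ℝ C)
    (hT : ∀ n, 1 ≤ n → ∀ x ∈ C, ∀ y ∈ C, ‖T n x - T n y‖ ≤ ‖x - y‖)
    (hper : ∀ n, 1 ≤ n → T (n + N) = T n)
    (hlam : ∀ n, 1 ≤ n → lam n ∈ Set.Icc (0 : ℝ) 1) (hu : u ∈ C) (hxC : ∀ n, x n ∈ C)
    (hx : ∀ n : ℕ, x (n + 1) = T (n + 1) (lam (n + 1) • u + (1 - lam (n + 1)) • x n))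
    {M : ℝ} (hxb : ∀ n, ‖x n - u‖ ≤ M) {K n : ℕ} (hKn : K ≤ n) :
    ‖x n - x (n + N)‖ ≤ (∏ k ∈ Ioc K n, (1 - lam k)) * ‖x K - x (K + N)‖ +
      M * ∑ k ∈ Ioc K n, |lam (k + N) - lam k| := by
  rw [mul_sum]
  exact le_prod_mul_add_sum_of_le_one_sub_mul_add (a := fun k => ‖x k - x (k + N)‖)
    (b := fun k => M * |lam (k + N) - lam k|) (fun k hk => hlam k (by omega))
    (fun k _ => mul_nonneg ((norm_nonneg _).trans (hxb 0)) (abs_nonneg _))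
    (fun k _ => norm_halpern_iterate_sub_add_period_le hC hT hper hlam hu hxC hx hxb k) n hKn

end Halpern

/-- Rate of convergence of `‖x n - x (n+N)‖ → 0` for the cyclic iteration
`x 0 = u`, `x (n+1) = T_{n+1} (λ_{n+1} • u + (1 - λ_{n+1}) • x n)`. -/
theorem stmt_3 {X : Type*} [NormedAddCommGroup X] [NormedSpace ℝ X]
    (N : ℕ) (hN : 1 ≤ N) (C : Set X) (hC : Convex ℝ C)
    (T : ℕ → X → X)
    (hTmap : ∀ i, 1 ≤ i → i ≤ N → Set.MapsTo (T i) C C)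
    (hTne : ∀ i, 1 ≤ i → i ≤ N → ∀ x ∈ C, ∀ y ∈ C, ‖T i x - T i y‖ ≤ ‖x - y‖)
    (hcyc : ∀ n, 1 ≤ n → T n = T ((n - 1) % N + 1))
    (lam : ℕ → ℝ) (hlam : ∀ n, 1 ≤ n → lam n ∈ Set.Icc (0 : ℝ) 1)
    (u : X) (hu : u ∈ C) (x : ℕ → X) (hx0 : x 0 = u)
    (hx : ∀ n : ℕ, x (n + 1) = T (n + 1) (lam (n + 1) • u + (1 - lam (n + 1)) • x n))
    (M : ℝ) (hM : 0 < M)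
    (hxb : ∀ n, 1 ≤ n → ‖x n - u‖ ≤ M)
    (θ : ℕ → ℕ)
    (hθ : ∀ m : ℕ, 1 ≤ m → (m : ℝ) ≤ ∑ n ∈ Finset.Icc 1 (θ m), lam n)
    (γ : ℝ → ℕ)
    (hγ : ∀ ε : ℝ, 0 < ε → ∀ m, 1 ≤ m →
      ∑ n ∈ Finset.Icc (γ ε + 1) (γ ε + m), |lam (n + N) - lam n| ≤ ε) :
    ∀ ε : ℝ, 0 < ε → ∀ n : ℕ,
      θ (γ (ε / (4 * M)) + max ⌈Real.log (4 * M / ε)⌉₊ 1) ≤ n →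
      ‖x n - x (n + N)‖ ≤ ε := by
  intro ε hε n hn
  set δ := ε / (4 * M)
  have hδ : 0 < δ := by positivity
  set K := γ δ
  set m := max ⌈Real.log (4 * M / ε)⌉₊ 1
  have hTmap' := forall_of_cyclic (Set.MapsTo · C C) hN hcyc hTmap
  have hTne' :=
    forall_of_cyclic (fun S => ∀ x ∈ C, ∀ y ∈ C, ‖S x - S y‖ ≤ ‖x - y‖) hN hcyc hTne
  have hxC := halpern_iterate_mem hC hTmap' hlam hu hx0 hx
  have hxb' : ∀ k, ‖x k - u‖ ≤ M := fun k => by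
    rcases k.eq_zero_or_pos with rfl | hk
    · simpa [hx0] using hM.le
    · exact hxb k hk
  have hKmn : K + m ≤ n :=
    (le_of_natCast_le_sum_Icc_one (fun k hk => (hlam k hk).2) (hθ (K + m) (by omega))).trans hn
  have hmass : (m : ℝ) ≤ ∑ k ∈ Ioc K n, lam k :=
    natCast_le_sum_Ioc_of_le_sum_Icc_one hlam (hθ (K + m) (by omega)) hn
  have hlog : Real.log δ⁻¹ ≤ m := by
    rw [inv_div]
    exact (Nat.le_ceil _).trans (by exact_mod_cast le_max_left _ _)
  have hprod : ∏ k ∈ Ioc K n, (1 - lam k) ≤ δ := calc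
    _ ≤ Real.exp (-∑ k ∈ Ioc K n, lam k) :=
      prod_one_sub_le_exp_neg_sum _ fun k hk => (hlam k (Nat.zero_lt_of_lt (mem_Ioc.1 hk).1)).2
    _ ≤ Real.exp (-m) := Real.exp_le_exp.2 (neg_le_neg hmass)
    _ ≤ δ := Real.exp_neg_le_of_log_inv_le hδ hlog
  have hdrift : ∑ k ∈ Ioc K n, |lam (k + N) - lam k| ≤ δ := by
    have := hγ δ hδ (n - K) (by omega)
    rwa [Icc_add_one_left_eq_Ioc, Nat.add_sub_cancel' (by omega)] at this
  have hstart : ‖x K - x (K + N)‖ ≤ 2 * M := by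
    linarith [norm_sub_le_norm_sub_add_norm_sub (x K) u (x (K + N)), hxb' K, hxb' (K + N),
      norm_sub_rev u (x (K + N))]
  calc ‖x n - x (n + N)‖
      ≤ (∏ k ∈ Ioc K n, (1 - lam k)) * ‖x K - x (K + N)‖ +
          M * ∑ k ∈ Ioc K n, |lam (k + N) - lam k| :=
        norm_halpern_iterate_sub_add_period_le_prod_mul_add_sum hC hTne'
          (fun k hk => cyclic_add_period hcyc hk) hlam hu hxC hx hxb' (by omega)
    _ ≤ δ * (2 * M) + M * δ := by gcongr
    _ = 3 / 4 * ε := by simp only [δ]; field_simp; ring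
    _ ≤ ε := by linarith
end

section
/- Let N ≥ 1, X a real normed space, C ⊆ X a nonempty bounded convex subset with diameter at most M for some M > 0, T_1,…,T_N : C → C nonexpansive mappings extended cyclically by T_n := T_{((n−1) mod N)+1}, λ_n = 1/(n+1) for n ≥ 1, u ∈ C, and let (x_n) be the cyclic Halpern iteration: x_0 = u, x_{n+1} = λ_{n+1}·u + (1 − λ_{n+1})·T_{n+1}x_n. Then for every ε > 0 and every n ≥ Ψ(ε) := 4^(⌈8M(N+1)/ε⌉+2), both ‖x_n − x_{n+N}‖ ≤ ε and ‖x_n − T_{n+N}⋯T_{n+1}x_n‖ ≤ ε. -/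
/-!
Write `aₙ = ‖xₙ - x_{n+N}‖`. Since `T_{n+N+1} = T_{n+1}`, comparing the two Halpern steps gives
`(n+N+2) a_{n+1} ≤ (n+N+1) aₙ + NM/(n+2)`, so `(n+N+1) aₙ - NM H_{n+1}` is nonincreasing
(`H` the harmonic numbers) and `aₙ = O(M(N+1) log n / n)`. Along the `N` steps from `xₙ`
the iteration differs from the plain composition of the `T_i` only by the anchor terms
`λ_{n+j} ‖u - ⋯‖ ≤ M/(n+1)`, so `‖x_{n+N} - T_{n+N}⋯T_{n+1} xₙ‖ ≤ NM/(n+1)`. Finally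
`2 + log t ≤ 2√t` turns the logarithmic bound into the exponential rate `Ψ`.
-/

open Set Real

/-- `iterComp T n N z` is the composition `T (n+N) (T (n+N-1) (⋯ (T (n+1) z)))`. -/
def iterComp {Y : Type*} (T : ℕ → Y → Y) (n : ℕ) : ℕ → Y → Y
  | 0, z => z
  | (k + 1), z => T (n + k + 1) (iterComp T n k z)

theorem mapsTo_iterComp {Y : Type*} {C : Set Y} {T : ℕ → Y → Y} {n : ℕ}
    (hT : ∀ m, MapsTo (T (n + m + 1)) C C) : ∀ k, MapsTo (iterComp T n k) C C
  | 0 => fun _ hz => hz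
  | k + 1 => fun _ hz => hT k (mapsTo_iterComp hT k hz)

section HalpernIteration

variable {X : Type*} [NormedAddCommGroup X] [NormedSpace ℝ X]
  {C : Set X} {M : ℝ} {u : X} {T : ℕ → X → X} {lam : ℕ → ℝ} {x : ℕ → X}

theorem norm_smul_add_sub_smul_add_le (v p q : X) {a b : ℝ} (hba : b ≤ a) (hb : b ≤ 1) :
    ‖(a • v + (1 - a) • p) - (b • v + (1 - b) • q)‖ ≤ (a - b) * ‖v - p‖ + (1 - b) * ‖p - q‖ := by
  have h : (a • v + (1 - a) • p) - (b • v + (1 - b) • q) =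
      (a - b) • (v - p) + (1 - b) • (p - q) := by
    module
  rw [h]
  refine (norm_add_le _ _).trans_eq ?_
  rw [norm_smul_of_nonneg (sub_nonneg.2 hba), norm_smul_of_nonneg (sub_nonneg.2 hb)]

theorem halpern_mem (hC : Convex ℝ C) (hu : u ∈ C) (hT : ∀ n, MapsTo (T (n + 1)) C C)
    (hlam : ∀ n, lam (n + 1) ∈ Icc (0 : ℝ) 1) (hx0 : x 0 = u)
    (hx : ∀ n, x (n + 1) = lam (n + 1) • u + (1 - lam (n + 1)) • T (n + 1) (x n)) :
    ∀ n, x n ∈ C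
  | 0 => hx0 ▸ hu
  | n + 1 => hx n ▸ hC hu (hT n (halpern_mem hC hu hT hlam hx0 hx n)) (hlam n).1
      (sub_nonneg.2 (hlam n).2) (add_sub_cancel _ _)

theorem norm_halpern_shift_succ_le {N : ℕ} (hdiam : ∀ y ∈ C, ∀ z ∈ C, ‖y - z‖ ≤ M) (hu : u ∈ C)
    (hT : ∀ n, MapsTo (T (n + 1)) C C)
    (hTne : ∀ n, ∀ y ∈ C, ∀ z ∈ C, ‖T (n + 1) y - T (n + 1) z‖ ≤ ‖y - z‖)
    (hper : ∀ n, T (n + N + 1) = T (n + 1))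
    (hx : ∀ n, x (n + 1) = lam (n + 1) • u + (1 - lam (n + 1)) • T (n + 1) (x n))
    (hxC : ∀ n, x n ∈ C) {n : ℕ} (hlam : lam (n + N + 1) ≤ lam (n + 1)) (hlam1 : lam (n + 1) ≤ 1) :
    ‖x (n + 1) - x (n + 1 + N)‖ ≤
      (lam (n + 1) - lam (n + N + 1)) * M + (1 - lam (n + N + 1)) * ‖x n - x (n + N)‖ := by
  rw [show n + 1 + N = n + N + 1 by omega, hx n, hx (n + N), hper n]
  refine (norm_smul_add_sub_smul_add_le _ _ _ hlam (hlam.trans hlam1)).trans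
    (add_le_add (mul_le_mul_of_nonneg_left ?_ (sub_nonneg.2 hlam))
      (mul_le_mul_of_nonneg_left ?_ (sub_nonneg.2 (hlam.trans hlam1))))
  · exact hdiam _ hu _ (hT n (hxC n))
  · exact hTne n _ (hxC n) _ (hxC (n + N))

theorem mul_norm_halpern_shift_succ_le {N : ℕ} (hdiam : ∀ y ∈ C, ∀ z ∈ C, ‖y - z‖ ≤ M)
    (hu : u ∈ C) (hT : ∀ n, MapsTo (T (n + 1)) C C)
    (hTne : ∀ n, ∀ y ∈ C, ∀ z ∈ C, ‖T (n + 1) y - T (n + 1) z‖ ≤ ‖y - z‖)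
    (hper : ∀ n, T (n + N + 1) = T (n + 1))
    (hlam : ∀ n, lam (n + 1) = 1 / ((n : ℝ) + 2))
    (hx : ∀ n, x (n + 1) = lam (n + 1) • u + (1 - lam (n + 1)) • T (n + 1) (x n))
    (hxC : ∀ n, x n ∈ C) (n : ℕ) :
    ((n : ℝ) + N + 2) * ‖x (n + 1) - x (n + 1 + N)‖ ≤
      ((n : ℝ) + N + 1) * ‖x n - x (n + N)‖ + N * M / (n + 2) := by
  have hle : lam (n + N + 1) ≤ lam (n + 1) := by
    rw [hlam, hlam]; push_cast; gcongr; linarith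
  have h1 : lam (n + 1) ≤ 1 := by
    rw [hlam, div_le_one (by positivity)]; linarith
  have h := norm_halpern_shift_succ_le hdiam hu hT hTne hper hx hxC hle h1
  rw [hlam, hlam] at h
  push_cast at h
  calc ((n : ℝ) + N + 2) * ‖x (n + 1) - x (n + 1 + N)‖
      ≤ ((n : ℝ) + N + 2) * ((1 / ((n : ℝ) + 2) - 1 / (n + N + 2)) * M
          + (1 - 1 / ((n : ℝ) + N + 2)) * ‖x n - x (n + N)‖) :=
        mul_le_mul_of_nonneg_left h (by positivity)
    _ = ((n : ℝ) + N + 1) * ‖x n - x (n + N)‖ + N * M / (n + 2) := by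
        field_simp; ring

theorem norm_halpern_shift_le {N : ℕ} (hdiam : ∀ y ∈ C, ∀ z ∈ C, ‖y - z‖ ≤ M)
    (hu : u ∈ C) (hT : ∀ n, MapsTo (T (n + 1)) C C)
    (hTne : ∀ n, ∀ y ∈ C, ∀ z ∈ C, ‖T (n + 1) y - T (n + 1) z‖ ≤ ‖y - z‖)
    (hper : ∀ n, T (n + N + 1) = T (n + 1))
    (hlam : ∀ n, lam (n + 1) = 1 / ((n : ℝ) + 2))
    (hx : ∀ n, x (n + 1) = lam (n + 1) • u + (1 - lam (n + 1)) • T (n + 1) (x n))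
    (hxC : ∀ n, x n ∈ C) (n : ℕ) :
    ‖x n - x (n + N)‖ ≤ (N + 1) * M * (1 + log (n + 1)) / (n + 1) := by
  have hanti : Antitone fun n : ℕ =>
      ((n : ℝ) + N + 1) * ‖x n - x (n + N)‖ - N * M * harmonic (n + 1) := by
    refine antitone_nat_of_succ_le fun n => ?_
    have := mul_norm_halpern_shift_succ_le hdiam hu hT hTne hper hlam hx hxC n
    rw [harmonic_succ (n + 1)]
    push_cast
    have hdiv : (N : ℝ) * M / (n + 2) = N * M * ((n : ℝ) + 1 + 1)⁻¹ := by ring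
    linarith
  have hstart : ((N : ℝ) + 1) * ‖x 0 - x N‖ - N * M ≤ M := by
    nlinarith [hdiam _ (hxC 0) _ (hxC N), N.cast_nonneg (α := ℝ)]
  have hharm : (harmonic (n + 1) : ℝ) ≤ 1 + log (n + 1) := by
    exact_mod_cast harmonic_le_one_add_log (n + 1)
  have hlog : 0 ≤ log ((n : ℝ) + 1) := log_nonneg (by linarith [n.cast_nonneg (α := ℝ)])
  have hM : 0 ≤ M := (norm_nonneg _).trans (hdiam u hu u hu)
  rw [le_div_iff₀ (by positivity)]
  calc ‖x n - x (n + N)‖ * (n + 1) ≤ ((n : ℝ) + N + 1) * ‖x n - x (n + N)‖ := by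
        nlinarith [norm_nonneg (x n - x (n + N)), N.cast_nonneg (α := ℝ)]
    _ ≤ M + N * M * harmonic (n + 1) := by
        have := hanti (Nat.zero_le n)
        have hone : harmonic 1 = 1 := by simp [harmonic]
        simp only [Nat.cast_zero, zero_add, hone, Rat.cast_one, mul_one] at this
        linarith
    _ ≤ (N + 1) * M * (1 + log (n + 1)) := by
        nlinarith [mul_le_mul_of_nonneg_left hharm (mul_nonneg N.cast_nonneg hM)]

theorem norm_halpern_sub_iterComp_le (hdiam : ∀ y ∈ C, ∀ z ∈ C, ‖y - z‖ ≤ M) (hu : u ∈ C)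
    (hT : ∀ n, MapsTo (T (n + 1)) C C)
    (hTne : ∀ n, ∀ y ∈ C, ∀ z ∈ C, ‖T (n + 1) y - T (n + 1) z‖ ≤ ‖y - z‖)
    (hx : ∀ n, x (n + 1) = lam (n + 1) • u + (1 - lam (n + 1)) • T (n + 1) (x n))
    (hxC : ∀ n, x n ∈ C) {n : ℕ} {c : ℝ} (hlam0 : ∀ j, 0 ≤ lam (n + j + 1))
    (hc : ∀ j, lam (n + j + 1) ≤ c) :
    ∀ k : ℕ, ‖x (n + k) - iterComp T n k (x n)‖ ≤ k * (c * M)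
  | 0 => by simp [iterComp]
  | k + 1 => by
    have hanchor : ‖x (n + k + 1) - T (n + k + 1) (x (n + k))‖ ≤ c * M := by
      rw [hx, show ∀ p : X, lam (n + k + 1) • u + (1 - lam (n + k + 1)) • p - p =
        lam (n + k + 1) • (u - p) from fun p => by module, norm_smul_of_nonneg (hlam0 k)]
      exact mul_le_mul (hc k) (hdiam _ hu _ (hT _ (hxC _))) (norm_nonneg _)
        ((hlam0 k).trans (hc k))
    have hiter : iterComp T n k (x n) ∈ C := mapsTo_iterComp (fun m => hT (n + m)) k (hxC n)
    calc ‖x (n + (k + 1)) - iterComp T n (k + 1) (x n)‖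
        ≤ ‖x (n + k + 1) - T (n + k + 1) (x (n + k))‖
          + ‖T (n + k + 1) (x (n + k)) - T (n + k + 1) (iterComp T n k (x n))‖ :=
          norm_sub_le_norm_sub_add_norm_sub _ _ _
      _ ≤ c * M + k * (c * M) := add_le_add hanchor ((hTne _ _ (hxC _) _ hiter).trans
          (norm_halpern_sub_iterComp_le hdiam hu hT hTne hx hxC hlam0 hc k))
      _ = (k + 1 : ℕ) * (c * M) := by push_cast; ring

end HalpernIteration

theorem natCast_le_sqrt_of_four_pow_le {K n : ℕ} (h : 4 ^ K ≤ n) : (K : ℝ) ≤ √n := by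
  rw [le_sqrt (by positivity) (by positivity)]
  have hK : K ^ 2 < 4 ^ K :=
    calc K ^ 2 < (2 ^ K) ^ 2 := Nat.pow_lt_pow_left Nat.lt_two_pow_self two_ne_zero
      _ = 4 ^ K := by rw [← pow_mul, mul_comm, pow_mul]; norm_num
  exact_mod_cast hK.le.trans h

theorem two_add_log_le_two_mul_sqrt {t : ℝ} (ht : 0 < t) : 2 + log t ≤ 2 * √t := by
  have h := log_le_sub_one_of_pos (sqrt_pos.2 ht)
  rw [log_sqrt ht.le] at h
  linarith

theorem halpern_rate_le {N n : ℕ} {M ε : ℝ} (hM : 0 ≤ M) (hε : 0 < ε)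
    (hn : 4 ^ (⌈8 * M * (N + 1) / ε⌉₊ + 2) ≤ n) :
    (N + 1) * M * (1 + log (n + 1)) / (n + 1) + N * M / (n + 1) ≤ ε := by
  set K := ⌈8 * M * (N + 1) / ε⌉₊
  have hK : 8 * M * (N + 1) ≤ K * ε := (div_le_iff₀ hε).1 (Nat.le_ceil _)
  have hKn : (K : ℝ) ≤ √(n + 1) :=
    (natCast_le_sqrt_of_four_pow_le
      ((Nat.pow_le_pow_right (by norm_num) (by omega)).trans hn)).trans (sqrt_le_sqrt (by linarith))
  have hlog := two_add_log_le_two_mul_sqrt (t := n + 1) (by positivity)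
  have hsq : √((n : ℝ) + 1) * √(n + 1) = n + 1 := mul_self_sqrt (by positivity)
  rw [← add_div, div_le_iff₀ (by positivity)]
  calc (N + 1) * M * (1 + log (n + 1)) + N * M ≤ (N + 1) * M * (2 + log (n + 1)) := by
        nlinarith
    _ ≤ (N + 1) * M * (2 * √(n + 1)) := by gcongr
    _ ≤ K * ε / 4 * √(n + 1) := by nlinarith [sqrt_nonneg ((n : ℝ) + 1)]
    _ ≤ √(n + 1) * ε / 4 * √(n + 1) := by gcongr
    _ = ε * (n + 1) / 4 := by linear_combination ε / 4 * hsq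
    _ ≤ ε * (n + 1) := by linarith [mul_pos hε (n.cast_add_one_pos (α := ℝ))]

theorem stmt_7_general {X : Type*} [NormedAddCommGroup X] [NormedSpace ℝ X]
    (N : ℕ) (hN : 1 ≤ N) (C : Set X) (hC : Convex ℝ C)
    (M : ℝ) (hdiam : ∀ x ∈ C, ∀ y ∈ C, ‖x - y‖ ≤ M)
    (T : ℕ → X → X)
    (hTmap : ∀ i, 1 ≤ i → i ≤ N → Set.MapsTo (T i) C C)
    (hTne : ∀ i, 1 ≤ i → i ≤ N → ∀ x ∈ C, ∀ y ∈ C, ‖T i x - T i y‖ ≤ ‖x - y‖)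
    (hcyc : ∀ n, 1 ≤ n → T n = T ((n - 1) % N + 1))
    (lam : ℕ → ℝ) (hlam : ∀ n, 1 ≤ n → lam n = 1 / (n + 1))
    (u : X) (hu : u ∈ C) (x : ℕ → X) (hx0 : x 0 = u)
    (hx : ∀ n : ℕ, x (n + 1) = lam (n + 1) • u + (1 - lam (n + 1)) • T (n + 1) (x n)) :
    ∀ ε : ℝ, 0 < ε → ∀ n : ℕ, 4 ^ (⌈8 * M * (N + 1) / ε⌉₊ + 2) ≤ n →
      ‖x n - x (n + N)‖ ≤ ε ∧ ‖x n - iterComp T n N (x n)‖ ≤ ε := by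
  have hM : 0 ≤ M := (norm_nonneg _).trans (hdiam u hu u hu)
  have hTsucc : ∀ n, T (n + 1) = T (n % N + 1) := fun n => by simpa using hcyc (n + 1) (by omega)
  have hmaps : ∀ n, Set.MapsTo (T (n + 1)) C C := fun n =>
    hTsucc n ▸ hTmap _ (by omega) (Nat.mod_lt n hN)
  have hnonexp : ∀ n, ∀ y ∈ C, ∀ z ∈ C, ‖T (n + 1) y - T (n + 1) z‖ ≤ ‖y - z‖ := fun n =>
    hTsucc n ▸ hTne _ (by omega) (Nat.mod_lt n hN)
  have hper : ∀ n, T (n + N + 1) = T (n + 1) := fun n => by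
    rw [hTsucc (n + N), hTsucc n, Nat.add_mod_right]
  have hlam_succ : ∀ n, lam (n + 1) = 1 / ((n : ℝ) + 2) := fun n => by
    rw [hlam _ n.succ_pos]; push_cast; ring
  have hlam_mem : ∀ n, lam (n + 1) ∈ Icc (0 : ℝ) 1 := fun n => by
    rw [hlam_succ n, mem_Icc, div_le_one (by positivity)]; exact ⟨by positivity, by linarith⟩
  have hxC := halpern_mem hC hu hmaps hlam_mem hx0 hx
  intro ε hε n hn
  have hshift := norm_halpern_shift_le hdiam hu hmaps hnonexp hper hlam_succ hx hxC n
  have horbit := norm_halpern_sub_iterComp_le hdiam hu hmaps hnonexp hx hxC (n := n)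
    (c := 1 / (n + 1)) (fun j => by rw [hlam_succ]; positivity)
    (fun j => by rw [hlam_succ]; gcongr 1 / ?_; push_cast; linarith) N
  have hrate := halpern_rate_le (N := N) hM hε hn
  refine ⟨by linarith [show 0 ≤ N * M / ((n : ℝ) + 1) by positivity], ?_⟩
  calc ‖x n - iterComp T n N (x n)‖
      ≤ ‖x n - x (n + N)‖ + ‖x (n + N) - iterComp T n N (x n)‖ :=
        norm_sub_le_norm_sub_add_norm_sub _ _ _
    _ ≤ (N + 1) * M * (1 + log (n + 1)) / (n + 1) + N * (1 / (n + 1) * M) :=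
        add_le_add hshift horbit
    _ = (N + 1) * M * (1 + log (n + 1)) / (n + 1) + N * M / (n + 1) := by ring
    _ ≤ ε := hrate

/-- Rate of asymptotic regularity `Ψ(ε) = 4^(⌈8M(N+1)/ε⌉+2)` for the cyclic Halpern
iteration with `λ_n = 1/(n+1)` on a nonempty bounded convex set of diameter at most `M`. -/
theorem stmt_7 {X : Type*} [NormedAddCommGroup X] [NormedSpace ℝ X]
    (N : ℕ) (hN : 1 ≤ N) (C : Set X) (hCne : C.Nonempty) (hC : Convex ℝ C)
    (M : ℝ) (hM : 0 < M) (hdiam : ∀ x ∈ C, ∀ y ∈ C, ‖x - y‖ ≤ M)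
    (T : ℕ → X → X)
    (hTmap : ∀ i, 1 ≤ i → i ≤ N → Set.MapsTo (T i) C C)
    (hTne : ∀ i, 1 ≤ i → i ≤ N → ∀ x ∈ C, ∀ y ∈ C, ‖T i x - T i y‖ ≤ ‖x - y‖)
    (hcyc : ∀ n, 1 ≤ n → T n = T ((n - 1) % N + 1))
    (lam : ℕ → ℝ) (hlam : ∀ n, 1 ≤ n → lam n = 1 / (n + 1))
    (u : X) (hu : u ∈ C) (x : ℕ → X) (hx0 : x 0 = u)
    (hx : ∀ n : ℕ, x (n + 1) = lam (n + 1) • u + (1 - lam (n + 1)) • T (n + 1) (x n)) :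
    ∀ ε : ℝ, 0 < ε → ∀ n : ℕ, 4 ^ (⌈8 * M * (N + 1) / ε⌉₊ + 2) ≤ n →
      ‖x n - x (n + N)‖ ≤ ε ∧ ‖x n - iterComp T n N (x n)‖ ≤ ε :=
  stmt_7_general N hN C hC M hdiam T hTmap hTne hcyc lam hlam u hu x hx0 hx
end
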